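/- arXiv:2412.05943 — 2 statements merged into one kernel-verified Lean document; each statement's English description precedes it below -/
import Mathlib

section
/- Let σ > 0 and η > 0. For every ε > 0 and δ > 0 there exists n₀ such that for all n ≥ n₀: with probability at least 1 − δ over X^{(n)} ~ N(0, σ²Iₙ), every perturbation ξ ∈ ℝⁿ with ‖ξ‖₂ ≤ η satisfies | −(1/n)·ln f_{n,σ}(X^{(n)} + ξ) − ln(√(2πe)·σ) | < B₂, where B₂ = (η² + 2η√(nσ²(1+2ε)))/(2nσ²) + ε. Equivalently, the perturbed sample X^{(n)} + ξ belongs to the typical set A^{(n)}_{B₂} with probability at least 1 − δ. (Theorem 3.7: L₂-bounded adversarial perturbations keep the sample in a slightly larger typical set.) -/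
open MeasureTheory ProbabilityTheory Real

/-- The joint density of `N(0, σ² Iₙ)`. -/
noncomputable def gaussDensity (σ : ℝ) (n : ℕ) (x : Fin n → ℝ) : ℝ :=
  (2 * π * σ ^ 2) ^ (-(n : ℝ) / 2) * Real.exp (-(∑ i, x i ^ 2) / (2 * σ ^ 2))

/-- The Euclidean (`L₂`) norm on `Fin n → ℝ`. -/
noncomputable def l2norm {n : ℕ} (x : Fin n → ℝ) : ℝ :=
  Real.sqrt (∑ i, x i ^ 2)

/-- The law of `X^{(n)} ~ N(0, σ² Iₙ)` on `Fin n → ℝ`. -/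
noncomputable def gaussPi (σ : ℝ) (n : ℕ) : Measure (Fin n → ℝ) :=
  Measure.pi fun _ : Fin n => gaussianReal 0 ((σ ^ 2).toNNReal)

/-- The typical set `A^{(n)}_B` of `N(0, σ² Iₙ)` with parameter `B`. -/
def typicalSet (σ : ℝ) (n : ℕ) (B : ℝ) : Set (Fin n → ℝ) :=
  {x | |(-(1 / (n : ℝ))) * Real.log (gaussDensity σ n x)
        - Real.log (Real.sqrt (2 * π * Real.exp 1) * σ)| ≤ B}


open Set
open scoped NNReal ENNReal

section Aux
lemma halfint_gauss {b : ℝ} (hb : 0 < b) (k : ℕ) :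
    ∫ x in Ioi (0:ℝ), x ^ k * rexp (-b * x ^ 2) =
      b ^ (-((k:ℝ)+1)/2) * (1/2) * Real.Gamma (((k:ℝ)+1)/2) := by
  have h := integral_rpow_mul_exp_neg_mul_rpow (p := 2) (q := (k:ℝ)) (b := b)
    two_pos (lt_of_lt_of_le neg_one_lt_zero (Nat.cast_nonneg k)) hb
  rw [← h]
  refine setIntegral_congr_fun measurableSet_Ioi (fun x hx => ?_)
  rw [Real.rpow_natCast, Real.rpow_two]

lemma fullline_gauss {b : ℝ} (hb : 0 < b) (k : ℕ) (hk : Even k) :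
    ∫ x : ℝ, x ^ k * rexp (-b * x ^ 2) =
      2 * ∫ x in Ioi (0:ℝ), x ^ k * rexp (-b * x ^ 2) := by
  have hint : Integrable (fun x : ℝ => x ^ k * rexp (-b * x ^ 2)) := by
    have := integrable_rpow_mul_exp_neg_mul_sq hb
      (s := (k:ℝ)) (lt_of_lt_of_le neg_one_lt_zero (Nat.cast_nonneg k))
    simpa [Real.rpow_natCast] using this
  have hsplit := integral_add_compl (measurableSet_Ioi (a := (0:ℝ))) hint
  have hcompl : (Ioi (0:ℝ))ᶜ = Iic 0 := by simp
  have hneg : ∫ x in Iic (0:ℝ), x ^ k * rexp (-b * x ^ 2)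
      = ∫ x in Ioi (0:ℝ), x ^ k * rexp (-b * x ^ 2) := by
    rw [show (Iic (0:ℝ)) = Iic (-0) by norm_num,
      ← integral_comp_neg_Ioi (f := fun x => x ^ k * rexp (-b * x ^ 2))]
    refine setIntegral_congr_fun measurableSet_Ioi (fun x hx => ?_)
    rw [hk.neg_pow]; norm_num
  rw [← hsplit, hcompl, hneg]; ring

lemma gaussM2 {b : ℝ} (hb : 0 < b) :
    ∫ x : ℝ, x ^ 2 * rexp (-b * x ^ 2) = b ^ (-(3:ℝ)/2) * (Real.sqrt π / 2) := by
  rw [fullline_gauss hb 2 (by decide), halfint_gauss hb 2]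
  have hG : Real.Gamma ((((2:ℕ):ℝ) + 1) / 2) = Real.sqrt π / 2 := by
    have : (((2:ℕ):ℝ) + 1) / 2 = 1/2 + 1 := by norm_num
    rw [this, Real.Gamma_add_one (by norm_num), Real.Gamma_one_half_eq]
    ring
  rw [hG]
  norm_num
  ring

lemma gaussM4 {b : ℝ} (hb : 0 < b) :
    ∫ x : ℝ, x ^ 4 * rexp (-b * x ^ 2) = b ^ (-(5:ℝ)/2) * (3 * Real.sqrt π / 4) := by
  rw [fullline_gauss hb 4 (by decide), halfint_gauss hb 4]
  have hG : Real.Gamma ((((4:ℕ):ℝ) + 1) / 2) = 3 * Real.sqrt π / 4 := by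
    have h1 : (((4:ℕ):ℝ) + 1) / 2 = 3/2 + 1 := by norm_num
    have h2 : (3:ℝ)/2 = 1/2 + 1 := by norm_num
    rw [h1, Real.Gamma_add_one (by norm_num), h2, Real.Gamma_add_one (by norm_num),
      Real.Gamma_one_half_eq]
    ring
  rw [hG]
  norm_num
  ring

lemma integral_fun_gaussianReal {v : ℝ} (hv : 0 < v) (g : ℝ → ℝ) :
    ∫ t, g t ∂(gaussianReal 0 v.toNNReal) =
      ∫ t, gaussianPDFReal 0 v.toNNReal t * g t := by
  have hvne : v.toNNReal ≠ 0 := by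
    simp [Real.toNNReal_eq_zero, not_le, hv]
  rw [gaussianReal_of_var_ne_zero 0 hvne]
  have : (gaussianPDF 0 v.toNNReal) =
      fun t => ((Real.toNNReal (gaussianPDFReal 0 v.toNNReal t) : ℝ≥0) : ℝ≥0∞) := rfl
  rw [this, integral_withDensity_eq_integral_smul₀
    ((measurable_gaussianPDFReal 0 v.toNNReal).real_toNNReal.aemeasurable) g]
  refine integral_congr_ae (Filter.Eventually.of_forall fun t => ?_)
  simp [NNReal.smul_def, Real.coe_toNNReal _ (gaussianPDFReal_nonneg 0 v.toNNReal t)]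

lemma arith_aux {v : ℝ} (hv : 0 < v) (c : ℝ) :
    ((2*v)⁻¹ : ℝ) ^ (-(c:ℝ)) = (2*v) ^ (c:ℝ) := by
  have h2v : (0:ℝ) < 2*v := by linarith
  rw [Real.inv_rpow h2v.le, ← Real.rpow_neg h2v.le]
  norm_num

lemma sqrt_split {v : ℝ} (hv : 0 < v) :
    Real.sqrt (2*π*v) = Real.sqrt (2*v) * Real.sqrt π := by
  rw [show 2*π*v = (2*v)*π by ring, Real.sqrt_mul (by linarith)]

lemma arith2 {v : ℝ} (hv : 0 < v) :
    (Real.sqrt (2*π*v))⁻¹ * (((2*v)⁻¹) ^ (-(3:ℝ)/2) * (Real.sqrt π/2)) = v := by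
  have h2v : (0:ℝ) < 2*v := by linarith
  have e1 : ((2*v)⁻¹ : ℝ) ^ (-(3:ℝ)/2) = (2*v) * Real.sqrt (2*v) := by
    rw [show (-(3:ℝ)/2) = -((3:ℝ)/2) by norm_num, arith_aux hv,
      show ((3:ℝ)/2) = 1 + 1/2 by norm_num, Real.rpow_add h2v, Real.rpow_one,
      ← Real.sqrt_eq_rpow]
  rw [e1, sqrt_split hv]
  have hs : Real.sqrt (2*v) > 0 := Real.sqrt_pos.mpr h2v
  have hp : Real.sqrt π > 0 := Real.sqrt_pos.mpr pi_pos
  field_simp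

lemma arith4 {v : ℝ} (hv : 0 < v) :
    (Real.sqrt (2*π*v))⁻¹ * (((2*v)⁻¹) ^ (-(5:ℝ)/2) * (3*Real.sqrt π/4)) = 3*v^2 := by
  have h2v : (0:ℝ) < 2*v := by linarith
  have e1 : ((2*v)⁻¹ : ℝ) ^ (-(5:ℝ)/2) = (2*v)^2 * Real.sqrt (2*v) := by
    rw [show (-(5:ℝ)/2) = -((5:ℝ)/2) by norm_num, arith_aux hv,
      show ((5:ℝ)/2) = 2 + 1/2 by norm_num, Real.rpow_add h2v,
      ← Real.sqrt_eq_rpow, Real.rpow_two]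
  rw [e1, sqrt_split hv]
  have hs : Real.sqrt (2*v) > 0 := Real.sqrt_pos.mpr h2v
  have hp : Real.sqrt π > 0 := Real.sqrt_pos.mpr pi_pos
  field_simp
  ring

lemma gaussPdf_eq {v : ℝ} (hv : 0 < v) (t : ℝ) :
    gaussianPDFReal 0 v.toNNReal t
      = (Real.sqrt (2*π*v))⁻¹ * rexp (-(2*v)⁻¹ * t^2) := by
  have hco : ((v.toNNReal : ℝ)) = v := Real.coe_toNNReal v hv.le
  rw [gaussianPDFReal]
  rw [hco]
  congr 1
  rw [sub_zero]
  congr 1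
  field_simp

lemma integrable_pow_gauss {v : ℝ} (hv : 0 < v) (k : ℕ) :
    Integrable (fun t : ℝ => t ^ k) (gaussianReal 0 v.toNNReal) := by
  have hvne : v.toNNReal ≠ 0 := by simp [Real.toNNReal_eq_zero, not_le, hv]
  rw [gaussianReal_of_var_ne_zero 0 hvne]
  have h : (gaussianPDF 0 v.toNNReal) =
      fun t => ((Real.toNNReal (gaussianPDFReal 0 v.toNNReal t) : ℝ≥0) : ℝ≥0∞) := rfl
  rw [h, integrable_withDensity_iff_integrable_smul₀
    ((measurable_gaussianPDFReal 0 v.toNNReal).real_toNNReal.aemeasurable)]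
  have hb : (0:ℝ) < (2*v)⁻¹ := by positivity
  have hint : Integrable (fun t : ℝ => t ^ k * rexp (-(2*v)⁻¹ * t ^ 2)) := by
    have := integrable_rpow_mul_exp_neg_mul_sq hb
      (s := (k:ℝ)) (lt_of_lt_of_le neg_one_lt_zero (Nat.cast_nonneg k))
    simpa [Real.rpow_natCast] using this
  refine (hint.const_mul ((Real.sqrt (2*π*v))⁻¹)).congr
    (Filter.Eventually.of_forall fun t => ?_)
  show _ = (gaussianPDFReal 0 v.toNNReal t).toNNReal • t ^ k
  rw [NNReal.smul_def, Real.coe_toNNReal _ (gaussianPDFReal_nonneg 0 v.toNNReal t),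
    gaussPdf_eq hv t, smul_eq_mul]
  ring

lemma integral_pow_gauss {v : ℝ} (hv : 0 < v) (k : ℕ) :
    ∫ t, t ^ k ∂(gaussianReal 0 v.toNNReal)
      = (Real.sqrt (2*π*v))⁻¹ * ∫ t : ℝ, t ^ k * rexp (-(2*v)⁻¹ * t^2) := by
  rw [integral_fun_gaussianReal hv]
  calc ∫ t, gaussianPDFReal 0 v.toNNReal t * t ^ k
      = ∫ t : ℝ, (Real.sqrt (2*π*v))⁻¹ * (t ^ k * rexp (-(2*v)⁻¹ * t^2)) := by
        refine integral_congr_ae (Filter.Eventually.of_forall fun t => ?_)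
        show gaussianPDFReal 0 v.toNNReal t * t ^ k = _
        rw [gaussPdf_eq hv t]; ring
    _ = (Real.sqrt (2*π*v))⁻¹ * ∫ t : ℝ, t ^ k * rexp (-(2*v)⁻¹ * t^2) :=
        integral_const_mul _ _

lemma integral_sq_gauss {v : ℝ} (hv : 0 < v) :
    ∫ t, t ^ 2 ∂(gaussianReal 0 v.toNNReal) = v := by
  have hb : (0:ℝ) < (2*v)⁻¹ := by positivity
  rw [integral_pow_gauss hv 2, gaussM2 hb]
  exact arith2 hv

lemma integral_four_gauss {v : ℝ} (hv : 0 < v) :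
    ∫ t, t ^ 4 ∂(gaussianReal 0 v.toNNReal) = 3 * v ^ 2 := by
  have hb : (0:ℝ) < (2*v)⁻¹ := by positivity
  rw [integral_pow_gauss hv 4, gaussM4 hb]
  exact arith4 hv

section
variable {ι : Type*} [Fintype ι] {α : ι → Type*} [∀ i, MeasurableSpace (α i)]
  (μ : ∀ i, Measure (α i)) [∀ i, IsProbabilityMeasure (μ i)]

lemma measure_pi_biInter (S : Finset ι) (sets : ∀ i, Set (α i)) :
    Measure.pi μ (⋂ i ∈ S, (fun x : ∀ j, α j => x i) ⁻¹' sets i)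
      = ∏ i ∈ S, μ i (sets i) := by
  classical
  have hset : (⋂ i ∈ S, (fun x : ∀ j, α j => x i) ⁻¹' sets i)
      = Set.pi Set.univ (fun i => if i ∈ S then sets i else Set.univ) := by
    ext x
    simp only [Set.mem_iInter, Set.mem_preimage, Set.mem_pi, Set.mem_univ, true_implies]
    constructor
    · intro h i
      by_cases hi : i ∈ S <;> simp [hi, h i]
    · intro h i hi
      have := h i
      simpa [hi] using this
  rw [hset, Measure.pi_pi]
  rw [show (∏ i ∈ S, μ i (sets i))
      = ∏ i, (if i ∈ S then μ i (sets i) else 1) by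
    rw [Finset.prod_ite_mem Finset.univ S (fun i => μ i (sets i)), Finset.univ_inter]]
  refine Finset.prod_congr rfl fun i _ => ?_
  by_cases hi : i ∈ S <;> simp [hi]

lemma measure_pi_eval (i : ι) (s : Set (α i)) :
    Measure.pi μ ((fun x : ∀ j, α j => x i) ⁻¹' s) = μ i s := by
  classical
  have := measure_pi_biInter μ {i} (fun j => if h : j = i then h ▸ s else Set.univ)
  simpa using this

lemma measurePreserving_eval' (i : ι) :
    MeasurePreserving (fun x : ∀ j, α j => x i) (Measure.pi μ) (μ i) := by
  refine ⟨measurable_pi_apply i, ?_⟩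
  refine Measure.ext fun s hs => ?_
  rw [Measure.map_apply (measurable_pi_apply i) hs, measure_pi_eval]

lemma iIndepFun_eval :
    iIndepFun (fun (i : ι) (x : ∀ j, α j) => x i)
      (Measure.pi μ) := by
  rw [iIndepFun_iff_measure_inter_preimage_eq_mul]
  intro S sets hsets
  rw [measure_pi_biInter]
  exact Finset.prod_congr rfl fun i _ => (measure_pi_eval μ i (sets i)).symm

end

section Prob

variable {v : ℝ}

lemma memL2_sq (hv : 0 < v) :
    MemLp (fun t : ℝ => t ^ 2) 2 (gaussianReal 0 v.toNNReal) := by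
  rw [memLp_two_iff_integrable_sq
    ((by fun_prop : Measurable fun t : ℝ => t ^ 2).aestronglyMeasurable)]
  simpa [← pow_mul] using integrable_pow_gauss hv 4

lemma prob_bound (hv : 0 < v) {ε δ : ℝ} (hε : 0 < ε) {n : ℕ} (hn1 : 1 ≤ n)
    (hδ' : 1 / (2 * ε ^ 2 * n) ≤ δ) :
    (Measure.pi fun _ : Fin n => gaussianReal 0 v.toNNReal)
      {x : Fin n → ℝ | ¬ (|∑ i, x i ^ 2 - n * v| < 2 * ε * (n * v))}
        ≤ ENNReal.ofReal δ := by
  set μ₁ := gaussianReal 0 v.toNNReal with hμ₁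
  set ν := Measure.pi fun _ : Fin n => μ₁ with hν
  have hnR : (0:ℝ) < n := by exact_mod_cast hn1
  set Y : Fin n → (Fin n → ℝ) → ℝ := fun i x => x i ^ 2 with hY
  have hmp : ∀ i, MeasurePreserving (fun x : Fin n → ℝ => x i) ν μ₁ :=
    fun i => measurePreserving_eval' _ i
  have hYmem : ∀ i, MemLp (Y i) 2 ν := fun i =>
    (memL2_sq hv).comp_measurePreserving (hmp i)
  -- integrals of coordinates
  have hint_pow : ∀ (i : Fin n) (k : ℕ),
      ∫ x, (x i) ^ k ∂ν = ∫ t, t ^ k ∂μ₁ := by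
    intro i k
    rw [← (hmp i).map_eq]
    exact (integral_map (φ := fun x : Fin n → ℝ => x i) (f := fun t : ℝ => t ^ k)
      (measurable_pi_apply i).aemeasurable
      ((by fun_prop : Measurable fun t : ℝ => t ^ k).aestronglyMeasurable)).symm
  have hEY : ∀ i, ∫ x, Y i x ∂ν = v := fun i => by
    rw [hY]; simp only
    rw [hint_pow i 2, integral_sq_gauss hv]
  have hVarY : ∀ i, variance (Y i) ν = 2 * v ^ 2 := by
    intro i
    rw [variance_eq_sub (hYmem i)]
    have h1 : ((Y i) ^ 2) = fun x : Fin n → ℝ => (x i) ^ 4 := by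
      funext x
      simp [hY, ← pow_mul]
    rw [h1, hint_pow i 4, integral_four_gauss hv, hEY i]
    ring
  -- the sum
  have hSmem : MemLp (∑ i, Y i) 2 ν :=
    memLp_finset_sum' _ (fun i _ => hYmem i)
  have hindep : iIndepFun
      (fun (i : Fin n) (x : Fin n → ℝ) => x i) ν := iIndepFun_eval _
  have hindepY : iIndepFun Y ν := by
    have := hindep.comp (fun _ => fun t : ℝ => t ^ 2)
      (fun _ => measurable_id.pow_const 2)
    exact this
  have hVarS : variance (∑ i, Y i) ν = n * (2 * v ^ 2) := by
    rw [IndepFun.variance_sum (fun i _ => hYmem i)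
      (fun i _ j _ hij => (hindepY.indepFun hij))]
    simp [hVarY, Finset.sum_const]
  have hES : ∫ x, (∑ i, Y i) x ∂ν = n * v := by
    have : ∫ x, (∑ i, Y i) x ∂ν = ∑ i : Fin n, ∫ x, Y i x ∂ν := by
      simp_rw [Finset.sum_apply]
      exact integral_finset_sum _ (fun i _ => ((hYmem i).integrable one_le_two))
    rw [this]
    simp [hEY, Finset.sum_const]
  set c : ℝ := 2 * ε * (n * v) with hc
  have hcpos : 0 < c := by positivity
  have hcheb := meas_ge_le_variance_div_sq (μ := ν) hSmem hcpos
  rw [hES] at hcheb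
  have hset : {x : Fin n → ℝ | ¬ (|∑ i, x i ^ 2 - n * v| < c)}
      = {x : Fin n → ℝ | c ≤ |(∑ i, Y i) x - n * v|} := by
    ext x
    simp [Finset.sum_apply, not_lt, hY]
  rw [hset]
  refine le_trans hcheb (ENNReal.ofReal_le_ofReal ?_)
  rw [hVarS]
  refine le_trans (le_of_eq ?_) hδ'
  rw [hc]
  field_simp

end Prob

lemma log_gaussDensity {σ : ℝ} (hσ : 0 < σ) {n : ℕ} (hn : 1 ≤ n) (y : Fin n → ℝ) :
    (-(1 / (n : ℝ))) * Real.log (gaussDensity σ n y)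
        - Real.log (Real.sqrt (2 * π * Real.exp 1) * σ)
      = (∑ i, y i ^ 2) / (2 * (n : ℝ) * σ ^ 2) - 1 / 2 := by
  have hnR : (0:ℝ) < n := by exact_mod_cast hn
  have hA : (0:ℝ) < 2 * π * σ ^ 2 := by positivity
  have h2pie : (0:ℝ) < 2 * π * Real.exp 1 := by positivity
  rw [gaussDensity, Real.log_mul (Real.rpow_pos_of_pos hA _).ne' (Real.exp_ne_zero _),
    Real.log_rpow hA, Real.log_exp,
    Real.log_mul (Real.sqrt_ne_zero'.mpr h2pie) hσ.ne',
    Real.log_sqrt h2pie.le,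
    show 2 * π * Real.exp 1 = (2 * π) * Real.exp 1 by ring,
    Real.log_mul (by positivity) (Real.exp_ne_zero 1), Real.log_exp,
    show 2 * π * σ ^ 2 = (2 * π) * σ ^ 2 by ring,
    Real.log_mul (by positivity) (by positivity), Real.log_pow]
  field_simp
  ring

lemma det_bound {σ η ε : ℝ} (hσ : 0 < σ) (hη : 0 < η) (hε : 0 < ε) {n : ℕ}
    (hn : 1 ≤ n) (x ξ : Fin n → ℝ)
    (hx : |∑ i, x i ^ 2 - (n : ℝ) * σ ^ 2| < 2 * ε * ((n : ℝ) * σ ^ 2))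
    (hξ : l2norm ξ ≤ η) :
    |(-(1 / (n : ℝ))) * Real.log (gaussDensity σ n (x + ξ))
        - Real.log (Real.sqrt (2 * π * Real.exp 1) * σ)|
      < (η ^ 2 + 2 * η * Real.sqrt ((n : ℝ) * σ ^ 2 * (1 + 2 * ε)))
          / (2 * (n : ℝ) * σ ^ 2) + ε := by
  have hnR : (0:ℝ) < n := by exact_mod_cast hn
  set N : ℝ := (n : ℝ) * σ ^ 2 with hN
  have hNpos : 0 < N := by positivity
  -- sum expansion
  have hsum : ∑ i, (x + ξ) i ^ 2
      = ∑ i, x i ^ 2 + 2 * (∑ i, x i * ξ i) + ∑ i, ξ i ^ 2 := by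
    rw [Finset.mul_sum, ← Finset.sum_add_distrib, ← Finset.sum_add_distrib]
    refine Finset.sum_congr rfl fun i _ => ?_
    simp [Pi.add_apply]
    ring
  have hx2 : ∑ i, x i ^ 2 ≤ N * (1 + 2 * ε) := by
    have := (abs_lt.mp hx).2
    nlinarith
  have hξ0 : (0:ℝ) ≤ ∑ i, ξ i ^ 2 := Finset.sum_nonneg fun i _ => sq_nonneg _
  have hξ2 : ∑ i, ξ i ^ 2 ≤ η ^ 2 := by
    have h1 : Real.sqrt (∑ i, ξ i ^ 2) ≤ Real.sqrt (η ^ 2) := by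
      rwa [Real.sqrt_sq hη.le]
    nlinarith [Real.sq_sqrt hξ0, Real.sqrt_nonneg (∑ i, ξ i ^ 2),
      Real.sqrt_sq hη.le, h1]
  have hCS : |∑ i, x i * ξ i| ≤ Real.sqrt (N * (1 + 2 * ε)) * η := by
    have h1 : (∑ i, x i * ξ i) ^ 2 ≤ (∑ i, x i ^ 2) * ∑ i, ξ i ^ 2 :=
      Finset.sum_mul_sq_le_sq_mul_sq _ _ _
    have h2 : |∑ i, x i * ξ i| = Real.sqrt ((∑ i, x i * ξ i) ^ 2) :=
      (Real.sqrt_sq_eq_abs _).symm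
    rw [h2]
    calc Real.sqrt ((∑ i, x i * ξ i) ^ 2)
        ≤ Real.sqrt ((∑ i, x i ^ 2) * ∑ i, ξ i ^ 2) := Real.sqrt_le_sqrt h1
      _ = Real.sqrt (∑ i, x i ^ 2) * Real.sqrt (∑ i, ξ i ^ 2) :=
          Real.sqrt_mul (Finset.sum_nonneg fun i _ => sq_nonneg _) _
      _ ≤ Real.sqrt (N * (1 + 2 * ε)) * η := by
          refine mul_le_mul (Real.sqrt_le_sqrt hx2) hξ (Real.sqrt_nonneg _)
            (Real.sqrt_nonneg _)
  have key : |∑ i, (x + ξ) i ^ 2 - N|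
      < η ^ 2 + 2 * η * Real.sqrt (N * (1 + 2 * ε)) + 2 * ε * N := by
    rw [hsum]
    have habs : |∑ i, x i ^ 2 + 2 * (∑ i, x i * ξ i) + ∑ i, ξ i ^ 2 - N|
        ≤ |∑ i, x i ^ 2 - N| + 2 * |∑ i, x i * ξ i| + ∑ i, ξ i ^ 2 := by
      have := abs_add_le (∑ i, x i ^ 2 - N + 2 * (∑ i, x i * ξ i)) (∑ i, ξ i ^ 2)
      have h2 := abs_add_le (∑ i, x i ^ 2 - N) (2 * (∑ i, x i * ξ i))
      rw [abs_mul] at h2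
      calc |∑ i, x i ^ 2 + 2 * (∑ i, x i * ξ i) + ∑ i, ξ i ^ 2 - N|
          = |(∑ i, x i ^ 2 - N + 2 * (∑ i, x i * ξ i)) + ∑ i, ξ i ^ 2| := by ring_nf
        _ ≤ |∑ i, x i ^ 2 - N + 2 * (∑ i, x i * ξ i)| + |∑ i, ξ i ^ 2| := abs_add_le _ _
        _ ≤ |∑ i, x i ^ 2 - N| + 2 * |∑ i, x i * ξ i| + ∑ i, ξ i ^ 2 := by
            rw [abs_of_nonneg hξ0]
            simp only [abs_two] at h2 ⊢
            linarith
    nlinarith [hCS, hx, habs]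
  rw [log_gaussDensity hσ hn (x + ξ)]
  have e1 : (∑ i, (x + ξ) i ^ 2) / (2 * (n : ℝ) * σ ^ 2) - 1 / 2
      = (∑ i, (x + ξ) i ^ 2 - N) / (2 * N) := by
    rw [hN]
    field_simp
  have e2 : (η ^ 2 + 2 * η * Real.sqrt (N * (1 + 2 * ε))) / (2 * (n : ℝ) * σ ^ 2) + ε
      = (η ^ 2 + 2 * η * Real.sqrt (N * (1 + 2 * ε)) + 2 * ε * N) / (2 * N) := by
    rw [hN]
    field_simp
  rw [e1, e2, abs_div, abs_of_pos (by positivity : (0:ℝ) < 2 * N)]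
  gcongr

end Aux

/-- Theorem 3.7: for every `ε > 0`, `δ > 0`, for all sufficiently large `n`, with
probability at least `1 − δ` over `X^{(n)} ~ N(0, σ² Iₙ)`, every perturbation `ξ`
with `‖ξ‖₂ ≤ η` satisfies
`|−(1/n)·ln f(X+ξ) − ln(√(2πe)σ)| < B₂` where
`B₂ = (η² + 2η√(nσ²(1+2ε)))/(2nσ²) + ε`; in particular `X^{(n)} + ξ ∈ A^{(n)}_{B₂}`. -/
theorem perturbed_sample_in_larger_typical_set_l2 (σ η : ℝ) (hσ : 0 < σ) (hη : 0 < η)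
    (ε δ : ℝ) (hε : 0 < ε) (hδ : 0 < δ) :
    ∃ n₀ : ℕ, ∀ n ≥ n₀,
      gaussPi σ n
        {x | ∀ ξ : Fin n → ℝ, l2norm ξ ≤ η →
          (|(-(1 / (n : ℝ))) * Real.log (gaussDensity σ n (x + ξ))
              - Real.log (Real.sqrt (2 * π * Real.exp 1) * σ)|
            < (η ^ 2 + 2 * η * Real.sqrt ((n : ℝ) * σ ^ 2 * (1 + 2 * ε)))
                / (2 * (n : ℝ) * σ ^ 2) + ε
           ∧ (x + ξ) ∈ typicalSet σ n
              ((η ^ 2 + 2 * η * Real.sqrt ((n : ℝ) * σ ^ 2 * (1 + 2 * ε)))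
                / (2 * (n : ℝ) * σ ^ 2) + ε))}
        ≥ ENNReal.ofReal (1 - δ) := by
  classical
  have hσ2 : (0:ℝ) < σ ^ 2 := by positivity
  refine ⟨max 1 ⌈(2 * ε ^ 2 * δ)⁻¹⌉₊, fun n hn => ?_⟩
  have hn1 : 1 ≤ n := le_trans (le_max_left _ _) hn
  have hnR : (0:ℝ) < n := by exact_mod_cast hn1
  have hδ' : 1 / (2 * ε ^ 2 * n) ≤ δ := by
    have h1 : ((⌈(2 * ε ^ 2 * δ)⁻¹⌉₊ : ℕ) : ℝ) ≤ n := by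
      exact_mod_cast le_trans (le_max_right _ _) hn
    have h2 : (2 * ε ^ 2 * δ)⁻¹ ≤ (n:ℝ) := le_trans (Nat.le_ceil _) h1
    rw [div_le_iff₀ (by positivity)]
    have h3 : (2 * ε ^ 2 * δ) * (2 * ε ^ 2 * δ)⁻¹ ≤ (2 * ε ^ 2 * δ) * n :=
      mul_le_mul_of_nonneg_left h2 (by positivity)
    rw [mul_inv_cancel₀ (by positivity)] at h3
    nlinarith [h3]
  set E := {x : Fin n → ℝ |
    |∑ i, x i ^ 2 - (n:ℝ) * σ ^ 2| < 2 * ε * ((n:ℝ) * σ ^ 2)} with hE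
  have hmeasE : MeasurableSet E := by
    have hm : Measurable fun x : Fin n → ℝ => |∑ i, x i ^ 2 - (n:ℝ) * σ ^ 2| := by
      fun_prop
    exact measurableSet_lt hm measurable_const
  have hgp : gaussPi σ n
      = Measure.pi fun _ : Fin n => gaussianReal 0 ((σ ^ 2).toNNReal) := rfl
  have hprob : IsProbabilityMeasure (gaussPi σ n) := by
    rw [hgp]; infer_instance
  have hcompl : gaussPi σ n Eᶜ ≤ ENNReal.ofReal δ := by
    rw [hgp]
    exact prob_bound hσ2 hε hn1 hδ'
  have hEsub : E ⊆ {x : Fin n → ℝ | ∀ ξ : Fin n → ℝ, l2norm ξ ≤ η →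
      (|(-(1 / (n : ℝ))) * Real.log (gaussDensity σ n (x + ξ))
          - Real.log (Real.sqrt (2 * π * Real.exp 1) * σ)|
        < (η ^ 2 + 2 * η * Real.sqrt ((n : ℝ) * σ ^ 2 * (1 + 2 * ε)))
            / (2 * (n : ℝ) * σ ^ 2) + ε
       ∧ (x + ξ) ∈ typicalSet σ n
          ((η ^ 2 + 2 * η * Real.sqrt ((n : ℝ) * σ ^ 2 * (1 + 2 * ε)))
            / (2 * (n : ℝ) * σ ^ 2) + ε))} := by
    intro x hx ξ hξ
    have hd := det_bound hσ hη hε hn1 x ξ hx hξ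
    exact ⟨hd, hd.le⟩
  have hcc : gaussPi σ n E = 1 - gaussPi σ n Eᶜ := by
    have := prob_compl_eq_one_sub (μ := gaussPi σ n) hmeasE.compl
    rwa [compl_compl] at this
  calc ENNReal.ofReal (1 - δ) ≤ 1 - ENNReal.ofReal δ := by
        rcases le_or_gt δ 1 with h | h
        · refine ENNReal.le_sub_of_add_le_right ENNReal.ofReal_ne_top (le_of_eq ?_)
          rw [← ENNReal.ofReal_add (by linarith) hδ.le]
          norm_num
        · rw [ENNReal.ofReal_eq_zero.mpr (by linarith)]
          exact zero_le
    _ ≤ 1 - gaussPi σ n Eᶜ := tsub_le_tsub_left hcompl 1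
    _ = gaussPi σ n E := hcc.symm
    _ ≤ _ := measure_mono hEsub
end

section
/- Let σ > 0, η > 0, ε > 0, and n ≥ 1. Set B₂ = (η² + 2η√(nσ²(1+2ε)))/(2nσ²) + ε and B∞ = η²/(2σ²) + √(2/π)·(η/σ) + (1 + η/σ²)·ε. Then ε ≤ B₂ always, and if moreover n ≥ (π/2)(1 + 2ε), then B₂ ≤ B∞; consequently the typical sets are nested, A^{(n)}_ε ⊆ A^{(n)}_{B₂} ⊆ A^{(n)}_{B∞}, and their Lebesgue volumes satisfy Vol(A^{(n)}_ε) ≤ Vol(A^{(n)}_{B₂}) ≤ Vol(A^{(n)}_{B∞}). (The volume inequality chain between the Gaussian typical set and the typical sets of L₂- and L∞-perturbed Gaussian noise.) -/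
open MeasureTheory ProbabilityTheory Real

lemma typicalSet_mono (σ : ℝ) (n : ℕ) {B B' : ℝ} (h : B ≤ B') :
    typicalSet σ n B ⊆ typicalSet σ n B' := fun _ hx => le_trans hx h

/-- The chain of typical-set inclusions and volume inequalities: with
`B₂ = (η² + 2η√(nσ²(1+2ε)))/(2nσ²) + ε` and
`B∞ = η²/(2σ²) + √(2/π)·(η/σ) + (1 + η/σ²)·ε`, one has `ε ≤ B₂` always, and if
`n ≥ (π/2)(1+2ε)` also `B₂ ≤ B∞`; consequently
`A^{(n)}_ε ⊆ A^{(n)}_{B₂} ⊆ A^{(n)}_{B∞}` with the corresponding volume chain. -/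
theorem typical_set_volume_chain (σ η ε : ℝ) (hσ : 0 < σ) (hη : 0 < η) (hε : 0 < ε)
    (n : ℕ) (hn : 1 ≤ n) :
    let B₂ : ℝ := (η ^ 2 + 2 * η * Real.sqrt ((n : ℝ) * σ ^ 2 * (1 + 2 * ε)))
        / (2 * (n : ℝ) * σ ^ 2) + ε
    let Binf : ℝ := η ^ 2 / (2 * σ ^ 2) + Real.sqrt (2 / π) * (η / σ)
        + (1 + η / σ ^ 2) * ε
    ε ≤ B₂
    ∧ typicalSet σ n ε ⊆ typicalSet σ n B₂
    ∧ volume (typicalSet σ n ε) ≤ volume (typicalSet σ n B₂)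
    ∧ ((n : ℝ) ≥ (π / 2) * (1 + 2 * ε) →
        B₂ ≤ Binf
        ∧ typicalSet σ n B₂ ⊆ typicalSet σ n Binf
        ∧ volume (typicalSet σ n B₂) ≤ volume (typicalSet σ n Binf)) := by
  intro B₂ Binf
  have hN : (1 : ℝ) ≤ (n : ℝ) := by exact_mod_cast hn
  have hNpos : (0 : ℝ) < (n : ℝ) := lt_of_lt_of_le one_pos hN
  have hσ2 : (0 : ℝ) < σ ^ 2 := by positivity
  have hεB₂ : ε ≤ B₂ := by
    have : 0 ≤ (η ^ 2 + 2 * η * Real.sqrt ((n : ℝ) * σ ^ 2 * (1 + 2 * ε)))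
        / (2 * (n : ℝ) * σ ^ 2) := by positivity
    simp only [B₂]; linarith
  refine ⟨hεB₂, typicalSet_mono σ n hεB₂, measure_mono (typicalSet_mono σ n hεB₂), ?_⟩
  intro hbig
  have hπ : (0 : ℝ) < π := Real.pi_pos
  have key : B₂ ≤ Binf := by
    have h1 : (n : ℝ) * σ ^ 2 * (1 + 2 * ε) ≤ ((n : ℝ) * σ) ^ 2 * (2 / π) := by
      have h2 : 1 + 2 * ε ≤ 2 * (n : ℝ) / π := by
        rw [le_div_iff₀ hπ]; nlinarith [hbig]
      calc (n : ℝ) * σ ^ 2 * (1 + 2 * ε) ≤ (n : ℝ) * σ ^ 2 * (2 * (n : ℝ) / π) := by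
            apply mul_le_mul_of_nonneg_left h2 (by positivity)
        _ = ((n : ℝ) * σ) ^ 2 * (2 / π) := by ring
    have h3 : Real.sqrt ((n : ℝ) * σ ^ 2 * (1 + 2 * ε)) ≤ (n : ℝ) * σ * Real.sqrt (2 / π) := by
      calc Real.sqrt ((n : ℝ) * σ ^ 2 * (1 + 2 * ε))
          ≤ Real.sqrt (((n : ℝ) * σ) ^ 2 * (2 / π)) := Real.sqrt_le_sqrt h1
        _ = (n : ℝ) * σ * Real.sqrt (2 / π) := by
            rw [Real.sqrt_mul (by positivity), Real.sqrt_sq (by positivity)]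
    -- split B₂
    have hA : η ^ 2 / (2 * (n : ℝ) * σ ^ 2) ≤ η ^ 2 / (2 * σ ^ 2) := by
      apply div_le_div_of_nonneg_left (by positivity) (by positivity)
      nlinarith
    have hB : 2 * η * Real.sqrt ((n : ℝ) * σ ^ 2 * (1 + 2 * ε)) / (2 * (n : ℝ) * σ ^ 2)
        ≤ Real.sqrt (2 / π) * (η / σ) := by
      have : 2 * η * Real.sqrt ((n : ℝ) * σ ^ 2 * (1 + 2 * ε))
          ≤ 2 * η * ((n : ℝ) * σ * Real.sqrt (2 / π)) := by
        apply mul_le_mul_of_nonneg_left h3 (by positivity)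
      calc 2 * η * Real.sqrt ((n : ℝ) * σ ^ 2 * (1 + 2 * ε)) / (2 * (n : ℝ) * σ ^ 2)
          ≤ 2 * η * ((n : ℝ) * σ * Real.sqrt (2 / π)) / (2 * (n : ℝ) * σ ^ 2) := by
            apply div_le_div_of_nonneg_right this (by positivity) |>.trans_eq rfl
        _ = Real.sqrt (2 / π) * (η / σ) := by field_simp
    have hC : (0 : ℝ) ≤ η / σ ^ 2 * ε := by positivity
    have hsplit : B₂ = η ^ 2 / (2 * (n : ℝ) * σ ^ 2)
        + 2 * η * Real.sqrt ((n : ℝ) * σ ^ 2 * (1 + 2 * ε)) / (2 * (n : ℝ) * σ ^ 2) + ε := by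
      simp only [B₂]; ring
    have hBinf : Binf = η ^ 2 / (2 * σ ^ 2) + Real.sqrt (2 / π) * (η / σ)
        + ε + η / σ ^ 2 * ε := by
      simp only [Binf]; ring
    rw [hsplit, hBinf]; linarith
  exact ⟨key, typicalSet_mono σ n key, measure_mono (typicalSet_mono σ n key)⟩
end
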